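/- Let F_1,...,F_m ∈ M(ℂ^d) be selfadjoint matrices with Tr(ρ F_i) = 0, let (k_{ij}) be a real symmetric m×m matrix, θ ∈ ℝ, and let K := θ·(1⊗1) + Σ_{i,j=1}^{m} k_{ij} F_i ⊗ F_j, a quantum symmetric kernel of order 2. Then for every n ≥ 2 the quantum U-statistic U_n with kernel K satisfies the operator identity: U_n − θ·1 = (n−1)^{-1} Σ_{i,j=1}^{m} k_{ij} ( F_n(F_i) ∘ F_n(F_j) − P_n(F_i ∘ F_j) ). -/
import Mathlib

open scoped BigOperators
open Matrix
open scoped ComplexOrder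

/-- The tensor product of a family of `d × d` matrices, as a matrix indexed by
multi-indices `Fin n → Fin d`. -/
noncomputable def tensorFam {d n : ℕ} (M : Fin n → Matrix (Fin d) (Fin d) ℂ) :
    Matrix (Fin n → Fin d) (Fin n → Fin d) ℂ :=
  Matrix.of fun x y => ∏ i, M i (x i) (y i)

/-- `H^{(i)} = 1 ⊗ ... ⊗ H ⊗ ... ⊗ 1`, with `H` in the `i`-th tensor slot. -/
noncomputable def amp {d n : ℕ} (i : Fin n) (H : Matrix (Fin d) (Fin d) ℂ) :
    Matrix (Fin n → Fin d) (Fin n → Fin d) ℂ :=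
  tensorFam fun j => if j = i then H else 1

/-- The fluctuation observable `F_n(A) := n^{-1/2} Σ_i A^{(i)}`. -/
noncomputable def Fluct {d : ℕ} (n : ℕ) (A : Matrix (Fin d) (Fin d) ℂ) :
    Matrix (Fin n → Fin d) (Fin n → Fin d) ℂ :=
  (Real.sqrt n)⁻¹ • ∑ i : Fin n, amp i A

/-- The empirical average `P_n(B) := n⁻¹ Σ_i B^{(i)}`. -/
noncomputable def Emp {d : ℕ} (n : ℕ) (B : Matrix (Fin d) (Fin d) ℂ) :
    Matrix (Fin n → Fin d) (Fin n → Fin d) ℂ :=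
  ((n : ℝ))⁻¹ • ∑ i : Fin n, amp i B

/-- The Jordan product `A ∘ B := (AB + BA)/2`. -/
noncomputable def jord {N : Type*} [Fintype N] [DecidableEq N]
    (X Y : Matrix N N ℂ) : Matrix N N ℂ :=
  (2 : ℝ)⁻¹ • (X * Y + Y * X)

/-- The ampliation `K^{(β)}` of a kernel `K` of order `2` to `(ℂ^d)^{⊗n}`. -/
noncomputable def ampl {d n : ℕ} (K : Matrix (Fin 2 → Fin d) (Fin 2 → Fin d) ℂ)
    (β : Finset (Fin n)) (hβ : β.card = 2) :
    Matrix (Fin n → Fin d) (Fin n → Fin d) ℂ :=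
  Matrix.of fun x y =>
    K (fun i => x ((β.orderIsoOfFin hβ i : Fin n)))
        (fun i => y ((β.orderIsoOfFin hβ i : Fin n))) *
      ∏ j ∈ βᶜ, if x j = y j then (1 : ℂ) else 0

/-- The quantum U-statistic `U_n = C(n,2)⁻¹ Σ_β K^{(β)}`. -/
noncomputable def qUstat {d : ℕ} (K : Matrix (Fin 2 → Fin d) (Fin 2 → Fin d) ℂ)
    (n : ℕ) : Matrix (Fin n → Fin d) (Fin n → Fin d) ℂ :=
  (n.choose 2 : ℂ)⁻¹ •
    ∑ β ∈ (Finset.powersetCard 2 (Finset.univ : Finset (Fin n))).attach,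
      ampl K β.1 (Finset.mem_powersetCard.mp β.2).2

/-! ### Auxiliary lemmas -/

lemma real_smul_mat {α β : Type*} [Fintype α] [Fintype β] (r : ℝ) (M : Matrix α β ℂ) :
    r • M = (r : ℂ) • M := by
  ext i j; simp [Matrix.smul_apply, Complex.real_smul]

lemma tensorFam_mul {d n : ℕ} (M N : Fin n → Matrix (Fin d) (Fin d) ℂ) :
    tensorFam M * tensorFam N = tensorFam fun j => M j * N j := by
  ext x y
  simp only [tensorFam, Matrix.mul_apply, Matrix.of_apply]
  rw [Finset.prod_univ_sum]
  rw [← Fintype.piFinset_univ]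
  rw [Finset.sum_congr rfl (fun z _ => (Finset.prod_mul_distrib).symm)]

lemma amp_mul_same {d n : ℕ} (a : Fin n) (A B : Matrix (Fin d) (Fin d) ℂ) :
    amp a A * amp a B = amp a (A * B) := by
  unfold amp
  rw [tensorFam_mul]
  refine congrArg tensorFam (funext fun j => ?_)
  by_cases h : j = a <;> simp [h]

noncomputable def pairMat {d n : ℕ} (a b : Fin n) (A B : Matrix (Fin d) (Fin d) ℂ) :
    Matrix (Fin n → Fin d) (Fin n → Fin d) ℂ :=
  tensorFam fun j => if j = a then A else if j = b then B else 1

lemma amp_mul_pair {d n : ℕ} {a b : Fin n} (hab : a ≠ b) (A B : Matrix (Fin d) (Fin d) ℂ) :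
    amp a A * amp b B = pairMat a b A B := by
  unfold amp pairMat
  rw [tensorFam_mul]
  refine congrArg tensorFam (funext fun j => ?_)
  by_cases h1 : j = a
  · subst h1; simp [hab]
  · by_cases h2 : j = b <;> simp [h1, h2, Ne.symm hab]

lemma pairMat_comm {d n : ℕ} {a b : Fin n} (hab : a ≠ b) (A B : Matrix (Fin d) (Fin d) ℂ) :
    pairMat a b A B = pairMat b a B A := by
  unfold pairMat
  refine congrArg tensorFam (funext fun j => ?_)
  by_cases h1 : j = a
  · subst h1; simp [hab]
  · by_cases h2 : j = b <;> simp [h1, h2, Ne.symm hab]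

lemma prod_slot_factor {d n : ℕ} (a : Fin n) (G : Fin n → Matrix (Fin d) (Fin d) ℂ)
    (x y : Fin n → Fin d) :
    ∏ j, G j (x j) (y j) = G a (x a) (y a) * ∏ j ∈ Finset.univ.erase a, G j (x j) (y j) := by
  rw [← Finset.mul_prod_erase Finset.univ _ (Finset.mem_univ a)]

lemma amp_add {d n : ℕ} (a : Fin n) (A B : Matrix (Fin d) (Fin d) ℂ) :
    amp a (A + B) = amp a A + amp a B := by
  ext x y
  simp only [amp, tensorFam, Matrix.of_apply, Matrix.add_apply]
  rw [prod_slot_factor a, prod_slot_factor a (fun j => if j = a then A else 1),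
    prod_slot_factor a (fun j => if j = a then B else 1)]
  have h : ∀ C : Matrix (Fin d) (Fin d) ℂ,
      ∏ j ∈ Finset.univ.erase a, (if j = a then C else 1) (x j) (y j)
        = ∏ j ∈ Finset.univ.erase a, (1 : Matrix (Fin d) (Fin d) ℂ) (x j) (y j) := by
    intro C
    refine Finset.prod_congr rfl fun j hj => ?_
    rw [if_neg (Finset.ne_of_mem_erase hj)]
  rw [h (A+B), h A, h B]
  simp [Matrix.add_apply, add_mul]

lemma amp_smul {d n : ℕ} (a : Fin n) (c : ℂ) (A : Matrix (Fin d) (Fin d) ℂ) :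
    amp a (c • A) = c • amp a A := by
  ext x y
  simp only [amp, tensorFam, Matrix.of_apply, Matrix.smul_apply]
  rw [prod_slot_factor a, prod_slot_factor a (fun j => if j = a then A else 1)]
  have h : ∀ C : Matrix (Fin d) (Fin d) ℂ,
      ∏ j ∈ Finset.univ.erase a, (if j = a then C else 1) (x j) (y j)
        = ∏ j ∈ Finset.univ.erase a, (1 : Matrix (Fin d) (Fin d) ℂ) (x j) (y j) := by
    intro C
    refine Finset.prod_congr rfl fun j hj => ?_
    rw [if_neg (Finset.ne_of_mem_erase hj)]
  rw [h, h A]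
  simp [Matrix.smul_apply]
  ring

lemma ampl_smul {d n : ℕ} (c : ℂ) (K : Matrix (Fin 2 → Fin d) (Fin 2 → Fin d) ℂ)
    (β : Finset (Fin n)) (hβ : β.card = 2) :
    ampl (c • K) β hβ = c • ampl K β hβ := by
  ext x y
  simp only [ampl, Matrix.of_apply, Matrix.smul_apply, smul_eq_mul]
  ring

lemma ampl_add {d n : ℕ} (K K' : Matrix (Fin 2 → Fin d) (Fin 2 → Fin d) ℂ)
    (β : Finset (Fin n)) (hβ : β.card = 2) :
    ampl (K + K') β hβ = ampl K β hβ + ampl K' β hβ := by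
  ext x y
  simp only [ampl, Matrix.of_apply, Matrix.add_apply]
  ring

lemma ampl_sum {d n : ℕ} {ι : Type*} (s : Finset ι)
    (K : ι → Matrix (Fin 2 → Fin d) (Fin 2 → Fin d) ℂ)
    (β : Finset (Fin n)) (hβ : β.card = 2) :
    ampl (∑ i ∈ s, K i) β hβ = ∑ i ∈ s, ampl (K i) β hβ := by
  ext x y
  simp only [ampl, Matrix.of_apply, Matrix.sum_apply, Finset.sum_mul]

lemma ampl_one {d n : ℕ} (β : Finset (Fin n)) (hβ : β.card = 2) :
    ampl (1 : Matrix (Fin 2 → Fin d) (Fin 2 → Fin d) ℂ) β hβ = 1 := by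
  ext x y
  simp only [ampl, Matrix.of_apply, Matrix.one_apply]
  by_cases hxy : x = y
  · subst hxy
    simp
  · rw [if_neg hxy]
    obtain ⟨j, hj⟩ : ∃ j, x j ≠ y j := by
      by_contra h
      push_neg at h
      exact hxy (funext h)
    by_cases hjβ : j ∈ β
    · have : ¬ (fun i => x ((β.orderIsoOfFin hβ i : Fin n)))
          = (fun i => y ((β.orderIsoOfFin hβ i : Fin n))) := by
        intro h
        have := congrFun h ((β.orderIsoOfFin hβ).symm ⟨j, hjβ⟩)
        simp at this
        exact hj this
      rw [if_neg this, zero_mul]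
    · rw [show (∏ j ∈ βᶜ, if x j = y j then (1:ℂ) else 0) = 0 from
        Finset.prod_eq_zero (Finset.mem_compl.mpr hjβ) (if_neg hj), mul_zero]

lemma orderIso_ne' {n : ℕ} (β : Finset (Fin n)) (hβ : β.card = 2) :
    (β.orderIsoOfFin hβ 0 : Fin n) ≠ (β.orderIsoOfFin hβ 1 : Fin n) := by
  intro h
  have := (β.orderIsoOfFin hβ).injective (Subtype.ext h)
  exact absurd this (by decide)

lemma orderIso_pair' {n : ℕ} (β : Finset (Fin n)) (hβ : β.card = 2) :
    β = {(β.orderIsoOfFin hβ 0 : Fin n), (β.orderIsoOfFin hβ 1 : Fin n)} := by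
  ext t
  constructor
  · intro ht
    have : t = ((β.orderIsoOfFin hβ ((β.orderIsoOfFin hβ).symm ⟨t, ht⟩) : β) : Fin n) := by simp
    rcases Fin.exists_fin_two.mp ⟨(β.orderIsoOfFin hβ).symm ⟨t, ht⟩, rfl⟩ with h | h
    · rw [this, ← h]; exact Finset.mem_insert_self _ _
    · rw [this, ← h]; exact Finset.mem_insert_of_mem (Finset.mem_singleton_self _)
  · intro ht
    rcases Finset.mem_insert.mp ht with h | h
    · rw [h]; exact (β.orderIsoOfFin hβ 0).2
    · rw [Finset.mem_singleton.mp h]; exact (β.orderIsoOfFin hβ 1).2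

lemma ampl_tensor2 {d n : ℕ} (β : Finset (Fin n)) (hβ : β.card = 2)
    (A B : Matrix (Fin d) (Fin d) ℂ) :
    ampl (tensorFam ![A, B]) β hβ =
      pairMat (β.orderIsoOfFin hβ 0 : Fin n) (β.orderIsoOfFin hβ 1 : Fin n) A B := by
  set a := (β.orderIsoOfFin hβ 0 : Fin n) with ha
  set b := (β.orderIsoOfFin hβ 1 : Fin n) with hb
  have hab : a ≠ b := orderIso_ne' β hβ
  have hset : β = {a, b} := orderIso_pair' β hβ
  ext x y
  simp only [ampl, pairMat, tensorFam, Matrix.of_apply]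
  rw [Fin.prod_univ_two]
  simp only [Matrix.cons_val_zero, Matrix.cons_val_one, Matrix.head_cons]
  have hsplit : (Finset.univ : Finset (Fin n)) = ({a, b} : Finset (Fin n)) ∪ ({a, b} : Finset (Fin n))ᶜ :=
    (Finset.union_compl _).symm
  rw [hsplit, Finset.prod_union disjoint_compl_right, Finset.prod_pair hab]
  have h1 : (if a = a then A else if a = b then B else 1) = A := by simp
  have h2 : (if b = a then A else if b = b then B else 1) = B := by simp [Ne.symm hab]
  rw [h1, h2]
  have h3 : ∏ j ∈ ({a, b} : Finset (Fin n))ᶜ, (if j = a then A else if j = b then B else 1) (x j) (y j)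
      = ∏ j ∈ βᶜ, if x j = y j then (1 : ℂ) else 0 := by
    rw [hset]
    refine Finset.prod_congr rfl fun j hj => ?_
    simp only [Finset.mem_compl, Finset.mem_insert, Finset.mem_singleton] at hj
    push_neg at hj
    rw [if_neg hj.1, if_neg hj.2]
    try rw [Matrix.one_apply]
  rw [← h3]

lemma pair_eq {α : Type*} [DecidableEq α] {a b c e : α} (hab : a ≠ b)
    (h : ({a, b} : Finset α) = {c, e}) : (a = c ∧ b = e) ∨ (a = e ∧ b = c) := by
  have ha : a ∈ ({c, e} : Finset α) := h ▸ Finset.mem_insert_self a {b}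
  have hb : b ∈ ({c, e} : Finset α) := h ▸ Finset.mem_insert_of_mem (Finset.mem_singleton_self b)
  simp only [Finset.mem_insert, Finset.mem_singleton] at ha hb
  rcases ha with h1 | h1 <;> rcases hb with h2 | h2
  · exact absurd (h1.trans h2.symm) hab
  · exact Or.inl ⟨h1, h2⟩
  · exact Or.inr ⟨h1, h2⟩
  · exact absurd (h1.trans h2.symm) hab

lemma sum_offDiag_eq {n : ℕ} {M : Type*} [AddCommMonoid M] (f : Fin n → Fin n → M) :
    ∑ p ∈ (Finset.univ : Finset (Fin n)).offDiag, f p.1 p.2 =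
    ∑ β ∈ (Finset.powersetCard 2 (Finset.univ : Finset (Fin n))).attach,
      (f (β.1.orderIsoOfFin (Finset.mem_powersetCard.mp β.2).2 0 : Fin n)
         (β.1.orderIsoOfFin (Finset.mem_powersetCard.mp β.2).2 1 : Fin n) +
       f (β.1.orderIsoOfFin (Finset.mem_powersetCard.mp β.2).2 1 : Fin n)
         (β.1.orderIsoOfFin (Finset.mem_powersetCard.mp β.2).2 0 : Fin n)) := by
  classical
  set t := (Finset.powersetCard 2 (Finset.univ : Finset (Fin n))).attach with ht
  set P : {β // β ∈ Finset.powersetCard 2 (Finset.univ : Finset (Fin n))} → Finset (Fin n × Fin n) :=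
    fun β => {((β.1.orderIsoOfFin (Finset.mem_powersetCard.mp β.2).2 0 : Fin n),
               (β.1.orderIsoOfFin (Finset.mem_powersetCard.mp β.2).2 1 : Fin n)),
              ((β.1.orderIsoOfFin (Finset.mem_powersetCard.mp β.2).2 1 : Fin n),
               (β.1.orderIsoOfFin (Finset.mem_powersetCard.mp β.2).2 0 : Fin n))} with hP
  have hPmem : ∀ β p, p ∈ P β → ({p.1, p.2} : Finset (Fin n)) = β.1 ∧ p.1 ≠ p.2 := by
    intro β p hp
    have hβ2 := (Finset.mem_powersetCard.mp β.2).2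
    have hne := orderIso_ne' β.1 hβ2
    have hpair := orderIso_pair' β.1 hβ2
    simp only [hP, Finset.mem_insert, Finset.mem_singleton] at hp
    rcases hp with h | h <;> subst h
    · exact ⟨hpair.symm, hne⟩
    · refine ⟨?_, hne.symm⟩
      rw [Finset.pair_comm]; exact hpair.symm
  have hdisj : (t : Set _).PairwiseDisjoint P := by
    intro β _ β' _ hne'
    simp only [Finset.disjoint_left]
    intro p hp hp'
    exact hne' (Subtype.ext (((hPmem β p hp).1.symm).trans (hPmem β' p hp').1))
  have hunion : t.biUnion P = (Finset.univ : Finset (Fin n)).offDiag := by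
    ext p
    simp only [Finset.mem_biUnion, Finset.mem_offDiag, Finset.mem_univ, true_and]
    constructor
    · rintro ⟨β, _, hp⟩
      exact (hPmem β p hp).2
    · intro hp
      have hmem : ({p.1, p.2} : Finset (Fin n)) ∈ Finset.powersetCard 2 (Finset.univ : Finset (Fin n)) := by
        rw [Finset.mem_powersetCard]
        exact ⟨Finset.subset_univ _, Finset.card_pair hp⟩
      refine ⟨⟨_, hmem⟩, Finset.mem_attach _ _, ?_⟩
      set β : {β // β ∈ Finset.powersetCard 2 (Finset.univ : Finset (Fin n))} := ⟨_, hmem⟩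
      have hβ2 := (Finset.mem_powersetCard.mp β.2).2
      have hne := orderIso_ne' β.1 hβ2
      have hpair : ({p.1, p.2} : Finset (Fin n))
          = {(β.1.orderIsoOfFin hβ2 0 : Fin n), (β.1.orderIsoOfFin hβ2 1 : Fin n)} :=
        orderIso_pair' β.1 hβ2
      rcases pair_eq hp hpair with ⟨h1, h2⟩ | ⟨h1, h2⟩ <;>
        simp only [hP, Finset.mem_insert, Finset.mem_singleton]
      · left; exact Prod.ext h1 h2
      · right; exact Prod.ext h1 h2
  rw [← hunion, Finset.sum_biUnion hdisj]
  refine Finset.sum_congr rfl fun β _ => ?_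
  have hβ2 := (Finset.mem_powersetCard.mp β.2).2
  have hne := orderIso_ne' β.1 hβ2
  rw [Finset.sum_pair (fun h => hne (congrArg Prod.fst h))]

lemma ampSum_mul {d n : ℕ} (X Y : Matrix (Fin d) (Fin d) ℂ) :
    (∑ a : Fin n, amp a X) * (∑ b : Fin n, amp b Y)
      = (∑ a : Fin n, amp a (X * Y))
        + ∑ p ∈ (Finset.univ : Finset (Fin n)).offDiag, pairMat p.1 p.2 X Y := by
  rw [Finset.sum_mul_sum, ← Finset.sum_product',
    ← Finset.diag_union_offDiag (Finset.univ : Finset (Fin n)),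
    Finset.sum_union (Finset.disjoint_diag_offDiag _)]
  congr 1
  · rw [Finset.sum_diag]
    exact Finset.sum_congr rfl fun a _ => amp_mul_same a X Y
  · exact Finset.sum_congr rfl fun p hp => amp_mul_pair (Finset.mem_offDiag.mp hp).2.2 X Y

lemma jord_fluct {d n : ℕ} (A B : Matrix (Fin d) (Fin d) ℂ) :
    jord (Fluct n A) (Fluct n B) - Emp n (jord A B)
      = ((n:ℂ)⁻¹ * (2:ℂ)⁻¹) •
        ∑ p ∈ (Finset.univ : Finset (Fin n)).offDiag,
          (pairMat p.1 p.2 A B + pairMat p.1 p.2 B A) := by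
  have hsq : (((Real.sqrt n : ℝ) : ℂ))⁻¹ * (((Real.sqrt n : ℝ) : ℂ))⁻¹ = (n:ℂ)⁻¹ := by
    rw [← mul_inv, ← Complex.ofReal_mul, Real.mul_self_sqrt (Nat.cast_nonneg n)]
    norm_num
  have e1 : (((2:ℝ)⁻¹ : ℝ) : ℂ) = (2:ℂ)⁻¹ := by norm_num
  have e2 : ((((n:ℝ))⁻¹ : ℝ) : ℂ) = (n:ℂ)⁻¹ := by push_cast; ring
  have e3 : ((((Real.sqrt n)⁻¹ : ℝ)) : ℂ) = (((Real.sqrt n : ℝ) : ℂ))⁻¹ := by push_cast; ring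
  unfold jord Fluct Emp
  simp only [real_smul_mat, e1, e2, e3, amp_smul]
  rw [Matrix.smul_mul, Matrix.mul_smul, smul_smul, Matrix.smul_mul, Matrix.mul_smul, smul_smul,
    hsq, ampSum_mul A B, ampSum_mul B A]
  simp only [← Finset.smul_sum, amp_add, Finset.sum_add_distrib]
  module

/-- **Explicit form of the U-statistic of a degenerate kernel of order 2.** -/
theorem stmt13 {d m : ℕ} (ρ : Matrix (Fin d) (Fin d) ℂ)
    (hρ : ρ.PosDef) (hρtr : ρ.trace = 1)
    (F : Fin m → Matrix (Fin d) (Fin d) ℂ)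
    (hF : ∀ i, (F i).IsHermitian)
    (hF0 : ∀ i, (ρ * F i).trace = 0)
    (k : Fin m → Fin m → ℝ) (hk : ∀ i j, k i j = k j i)
    (θ : ℝ)
    (K : Matrix (Fin 2 → Fin d) (Fin 2 → Fin d) ℂ)
    (hK : K = θ • (1 : Matrix (Fin 2 → Fin d) (Fin 2 → Fin d) ℂ) +
      ∑ i : Fin m, ∑ j : Fin m, (k i j) • tensorFam ![F i, F j])
    (n : ℕ) (hn : 2 ≤ n) :
    qUstat K n - θ • (1 : Matrix (Fin n → Fin d) (Fin n → Fin d) ℂ) =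
      ((n : ℝ) - 1)⁻¹ •
        ∑ i : Fin m, ∑ j : Fin m,
          (k i j) • (jord (Fluct n (F i)) (Fluct n (F j)) - Emp n (jord (F i) (F j))) := by
  classical
  have hn0 : (n : ℂ) ≠ 0 := Nat.cast_ne_zero.mpr (by omega)
  have hn1 : ((n : ℂ) - 1) ≠ 0 := by
    intro h
    have : (n : ℂ) = ((1 : ℕ) : ℂ) := by push_cast; linear_combination h
    have := Nat.cast_injective (R := ℂ) this
    omega
  have hC : (n.choose 2 : ℂ) ≠ 0 := Nat.cast_ne_zero.mpr (Nat.choose_pos hn).ne'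
  -- the main bilinear object
  set R := ∑ β ∈ (Finset.powersetCard 2 (Finset.univ : Finset (Fin n))).attach,
      ∑ i : Fin m, ∑ j : Fin m, (k i j : ℂ) •
        pairMat (β.1.orderIsoOfFin (Finset.mem_powersetCard.mp β.2).2 0 : Fin n)
          (β.1.orderIsoOfFin (Finset.mem_powersetCard.mp β.2).2 1 : Fin n) (F i) (F j) with hR
  -- Step A : LHS
  have hamplK : ∀ (β : Finset (Fin n)) (hβ : β.card = 2),
      ampl K β hβ = (θ : ℂ) • (1 : Matrix (Fin n → Fin d) (Fin n → Fin d) ℂ)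
        + ∑ i : Fin m, ∑ j : Fin m, (k i j : ℂ) •
            pairMat (β.orderIsoOfFin hβ 0 : Fin n) (β.orderIsoOfFin hβ 1 : Fin n) (F i) (F j) := by
    intro β hβ
    rw [hK, ampl_add, real_smul_mat, ampl_smul, ampl_one, ampl_sum]
    congr 1
    refine Finset.sum_congr rfl fun i _ => ?_
    rw [ampl_sum]
    refine Finset.sum_congr rfl fun j _ => ?_
    rw [real_smul_mat, ampl_smul, ampl_tensor2]
  have hcard : ((Finset.powersetCard 2 (Finset.univ : Finset (Fin n))).attach).card = n.choose 2 := by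
    rw [Finset.card_attach, Finset.card_powersetCard, Finset.card_univ, Fintype.card_fin]
  have hL : qUstat K n - θ • (1 : Matrix (Fin n → Fin d) (Fin n → Fin d) ℂ)
      = ((n.choose 2 : ℂ))⁻¹ • R := by
    rw [qUstat, Finset.sum_congr rfl (fun β _ => hamplK β.1 (Finset.mem_powersetCard.mp β.2).2),
      Finset.sum_add_distrib, Finset.sum_const, hcard, smul_add,
      ← Nat.cast_smul_eq_nsmul ℂ, smul_smul, inv_mul_cancel₀ hC, one_smul, real_smul_mat, ← hR]
    exact add_sub_cancel_left _ _
  -- symmetry helper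
  have hsymm : ∀ a b : Fin n, a ≠ b →
      (∑ i : Fin m, ∑ j : Fin m, (k i j : ℂ) • pairMat b a (F i) (F j))
        = ∑ i : Fin m, ∑ j : Fin m, (k i j : ℂ) • pairMat a b (F i) (F j) := by
    intro a b hab
    rw [Finset.sum_comm]
    refine Finset.sum_congr rfl fun x _ => Finset.sum_congr rfl fun y _ => ?_
    rw [hk y x, pairMat_comm hab.symm (F y) (F x)]
  -- relating R with the off-diagonal sum
  have hoff : ∑ p ∈ (Finset.univ : Finset (Fin n)).offDiag,
      ∑ i : Fin m, ∑ j : Fin m, (k i j : ℂ) • pairMat p.1 p.2 (F i) (F j) = R + R := by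
    rw [sum_offDiag_eq (fun a b => ∑ i : Fin m, ∑ j : Fin m, (k i j : ℂ) • pairMat a b (F i) (F j)),
      hR, ← Finset.sum_add_distrib]
    refine Finset.sum_congr rfl fun β _ => ?_
    congr 1
    exact hsymm _ _ (orderIso_ne' β.1 (Finset.mem_powersetCard.mp β.2).2)
  have hswap : ∑ p ∈ (Finset.univ : Finset (Fin n)).offDiag,
      ∑ i : Fin m, ∑ j : Fin m, (k i j : ℂ) • pairMat p.1 p.2 (F i) (F j)
      = ∑ i : Fin m, ∑ j : Fin m, (k i j : ℂ) •
          ∑ p ∈ (Finset.univ : Finset (Fin n)).offDiag, pairMat p.1 p.2 (F i) (F j) := by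
    rw [Finset.sum_comm]
    refine Finset.sum_congr rfl fun i _ => ?_
    rw [Finset.sum_comm]
    exact Finset.sum_congr rfl fun j _ => (Finset.smul_sum).symm
  have hXR : (∑ i : Fin m, ∑ j : Fin m, (k i j : ℂ) •
      ∑ p ∈ (Finset.univ : Finset (Fin n)).offDiag, pairMat p.1 p.2 (F i) (F j)) = R + R :=
    hswap.symm.trans hoff
  have hYX : (∑ i : Fin m, ∑ j : Fin m, (k i j : ℂ) •
      ∑ p ∈ (Finset.univ : Finset (Fin n)).offDiag, pairMat p.1 p.2 (F j) (F i))
      = ∑ i : Fin m, ∑ j : Fin m, (k i j : ℂ) •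
          ∑ p ∈ (Finset.univ : Finset (Fin n)).offDiag, pairMat p.1 p.2 (F i) (F j) := by
    rw [Finset.sum_comm]
    refine Finset.sum_congr rfl fun x _ => Finset.sum_congr rfl fun y _ => ?_
    rw [hk y x]
  -- Step B : RHS
  have hRHS : (((n : ℝ) - 1))⁻¹ •
      (∑ i : Fin m, ∑ j : Fin m,
        (k i j) • (jord (Fluct n (F i)) (Fluct n (F j)) - Emp n (jord (F i) (F j))))
      = ((((n:ℂ) - 1))⁻¹ * ((n:ℂ)⁻¹ * (2:ℂ)⁻¹)) • ((R + R) + (R + R)) := by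
    have step1 : ∀ i j : Fin m,
        (k i j) • (jord (Fluct n (F i)) (Fluct n (F j)) - Emp n (jord (F i) (F j)))
          = (k i j : ℂ) • ((n:ℂ)⁻¹ * (2:ℂ)⁻¹) •
              (∑ p ∈ (Finset.univ : Finset (Fin n)).offDiag, pairMat p.1 p.2 (F i) (F j)
                + ∑ p ∈ (Finset.univ : Finset (Fin n)).offDiag, pairMat p.1 p.2 (F j) (F i)) := by
      intro i j
      rw [real_smul_mat, jord_fluct, ← Finset.sum_add_distrib]
    rw [real_smul_mat, Finset.sum_congr rfl
      (fun i _ => Finset.sum_congr rfl fun j _ => step1 i j)]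
    have e4 : ((((n : ℝ) - 1)⁻¹ : ℝ) : ℂ) = ((n:ℂ) - 1)⁻¹ := by push_cast; ring
    rw [e4]
    simp only [smul_add, Finset.sum_add_distrib,
      smul_comm ((k _ _ : ℂ)) (((n:ℂ)⁻¹ * (2:ℂ)⁻¹)), ← Finset.smul_sum]
    rw [hYX, hXR]
    module
  rw [hL, hRHS, show ((R + R) + (R + R)) = (4:ℂ) • R from by module, smul_smul]
  congr 1
  have h2 : 2 * (n.choose 2) = n * (n - 1) := by
    have hev : Even (n * (n - 1)) := by
      rcases Nat.even_or_odd n with h | h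
      · exact h.mul_right _
      · exact (Nat.Odd.sub_odd h odd_one).mul_left _
    rw [Nat.choose_two_right, Nat.two_mul_div_two_of_even hev]
  have h2C : (n.choose 2 : ℂ) * 2 = (n:ℂ) * ((n:ℂ) - 1) := by
    have hcast := congrArg (Nat.cast (R := ℂ)) h2
    push_cast [Nat.cast_sub (show 1 ≤ n by omega)] at hcast
    linear_combination hcast
  have h20 : (2 : ℂ) ≠ 0 := two_ne_zero
  field_simp
  linear_combination (-2:ℂ) * h2C
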